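/- arXiv:1908.08438 — 6 statements merged into one kernel-verified Lean document; each statement's English description precedes it below -/
import Mathlib

section
/- Let d≥2, n≥0, and h=(h_1,...,h_d) with h_1≥k where k≤n-2. For ℓ in {0,...,k}, let C(d,h,ℓ)={(b_1,...,b_d)∈ℕ^d : b_1+...+b_d=ℓ, b_i≤h_i for all i} and δ_{k-ℓ}=|C(d,h,k-ℓ)|−|C(d,h,k-ℓ-1)| (with C(d,h,-1)=∅). Then δ_{k-ℓ} = |{b∈C(d,h,k) : b_1=ℓ}|. -/
/-- `C(d,h,ℓ)`: tuples in `ℕ^d` summing to `ℓ` with `b i ≤ h i`. -/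
def Ctup (d : ℕ) (h : Fin d → ℕ) (ℓ : ℕ) : Finset (Fin d → ℕ) :=
  (Finset.Nat.antidiagonalTuple d ℓ).filter (fun b => ∀ i, b i ≤ h i)

lemma mem_Ctup {d : ℕ} {h : Fin d → ℕ} {s : ℕ} {b : Fin d → ℕ} :
    b ∈ Ctup d h s ↔ (∑ i, b i) = s ∧ ∀ i, b i ≤ h i := by
  simp [Ctup, Finset.Nat.mem_antidiagonalTuple, Finset.mem_filter]

lemma sum_update {d : ℕ} (i0 : Fin d) (b : Fin d → ℕ) (c : ℕ) :
    (∑ i, Function.update b i0 c i) + b i0 = (∑ i, b i) + c := by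
  rw [Finset.sum_update_of_mem (Finset.mem_univ i0),
    ← Finset.sum_erase_add Finset.univ b (Finset.mem_univ i0),
    Finset.sdiff_singleton_eq_erase]
  ring

/-- if `h 0 ≥ k` and `k ≤ n-2`, then for `0 ≤ ℓ ≤ k`,
`δ_{k-ℓ} = |C(d,h,k-ℓ)| - |C(d,h,k-ℓ-1)|` (with `C(d,h,-1) = ∅`) equals
the number of `b ∈ C(d,h,k)` with `b 0 = ℓ`. -/
theorem stmt0 (d n k : ℕ) (hd : 2 ≤ d) (h : Fin d → ℕ)
    (hk : k + 2 ≤ n) (hh : k ≤ h ⟨0, by omega⟩) (ℓ : ℕ) (hℓ : ℓ ≤ k) :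
    ((Ctup d h (k - ℓ)).card : ℤ) -
      (if ℓ < k then ((Ctup d h (k - ℓ - 1)).card : ℤ) else 0) =
    ((Ctup d h k).filter (fun b => b ⟨0, by omega⟩ = ℓ)).card := by
  set i0 : Fin d := ⟨0, by omega⟩ with hi0
  set m := k - ℓ with hm
  by_cases hcase : ℓ < k
  · -- m ≥ 1
    have hm1 : 1 ≤ m := by omega
    -- bijection 2: tuples summing to m with b i0 ≠ 0 ↔ tuples summing to m-1
    have key2 : ((Ctup d h m).filter (fun b => ¬ b i0 = 0)).card
        = (Ctup d h (m - 1)).card := by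
      refine Finset.card_bij' (fun b _ => Function.update b i0 (b i0 - 1))
        (fun c _ => Function.update c i0 (c i0 + 1)) ?_ ?_ ?_ ?_
      · intro b hb
        simp only [Finset.mem_filter, mem_Ctup] at hb ⊢
        obtain ⟨⟨hsum, hle⟩, hb0⟩ := hb
        have := sum_update i0 b (b i0 - 1)
        refine ⟨by omega, ?_⟩
        intro i
        by_cases hi : i = i0
        · subst hi; rw [Function.update_self]
          exact le_trans (Nat.sub_le _ _) (hle i0)
        · rw [Function.update_of_ne hi]; exact hle i
      · intro c hc
        simp only [mem_Ctup, Finset.mem_filter] at hc ⊢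
        obtain ⟨hsum, hle⟩ := hc
        have hci0 : c i0 ≤ m - 1 := by
          have := Finset.single_le_sum (f := c) (fun i _ => Nat.zero_le _)
            (Finset.mem_univ i0)
          omega
        have := sum_update i0 c (c i0 + 1)
        refine ⟨⟨by omega, ?_⟩, by simp⟩
        intro i
        by_cases hi : i = i0
        · subst hi; simp; omega
        · rw [Function.update_of_ne hi]; exact hle i
      · intro b hb
        simp only [Finset.mem_filter] at hb
        funext i
        by_cases hi : i = i0
        · subst hi; simp; omega
        · simp [Function.update_of_ne hi]
      · intro c hc
        funext i
        by_cases hi : i = i0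
        · subst hi; simp
        · simp [Function.update_of_ne hi]
    -- bijection 1
    have key1 : ((Ctup d h m).filter (fun b => b i0 = 0)).card
        = ((Ctup d h k).filter (fun b => b i0 = ℓ)).card := by
      clear key2
      refine Finset.card_bij' (fun b _ => Function.update b i0 ℓ)
        (fun c _ => Function.update c i0 0) ?_ ?_ ?_ ?_
      · intro b hb
        simp only [Finset.mem_filter, mem_Ctup] at hb ⊢
        obtain ⟨⟨hsum, hle⟩, hb0⟩ := hb
        have := sum_update i0 b ℓ
        refine ⟨⟨by omega, ?_⟩, by simp⟩
        intro i
        by_cases hi : i = i0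
        · subst hi; simpa using le_trans hℓ hh
        · rw [Function.update_of_ne hi]; exact hle i
      · intro c hc
        simp only [Finset.mem_filter, mem_Ctup] at hc ⊢
        obtain ⟨⟨hsum, hle⟩, hc0⟩ := hc
        have := sum_update i0 c 0
        refine ⟨⟨by omega, ?_⟩, by simp⟩
        intro i
        by_cases hi : i = i0
        · subst hi; simp
        · rw [Function.update_of_ne hi]; exact hle i
      · intro b hb
        simp only [Finset.mem_filter] at hb
        funext i
        by_cases hi : i = i0
        · subst hi; simp [hb.2]
        · simp [Function.update_of_ne hi]
      · intro c hc
        simp only [Finset.mem_filter] at hc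
        funext i
        by_cases hi : i = i0
        · subst hi; simp [hc.2]
        · simp [Function.update_of_ne hi]
    have hsplit : ((Ctup d h m).filter (fun b => b i0 = 0)).card
        + ((Ctup d h m).filter (fun b => ¬ b i0 = 0)).card = (Ctup d h m).card :=
      Finset.card_filter_add_card_filter_not (s := Ctup d h m) (fun b => b i0 = 0)
    rw [if_pos hcase, ← key1, ← key2, ← hsplit]
    push_cast
    ring
  · -- ℓ = k, m = 0
    have hm0 : m = 0 := by omega
    have key1 : ((Ctup d h m).filter (fun b => b i0 = 0)).card
        = ((Ctup d h k).filter (fun b => b i0 = ℓ)).card := by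
      have hlk : ℓ = k := by omega
      refine Finset.card_bij' (fun b _ => Function.update b i0 ℓ)
        (fun c _ => Function.update c i0 0) ?_ ?_ ?_ ?_
      · intro b hb
        simp only [Finset.mem_filter, mem_Ctup] at hb ⊢
        obtain ⟨⟨hsum, hle⟩, hb0⟩ := hb
        have := sum_update i0 b ℓ
        refine ⟨⟨by omega, ?_⟩, by simp⟩
        intro i
        by_cases hi : i = i0
        · subst hi; simpa using le_trans hℓ hh
        · rw [Function.update_of_ne hi]; exact hle i
      · intro c hc
        simp only [Finset.mem_filter, mem_Ctup] at hc ⊢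
        obtain ⟨⟨hsum, hle⟩, hc0⟩ := hc
        have := sum_update i0 c 0
        refine ⟨⟨by omega, ?_⟩, by simp⟩
        intro i
        by_cases hi : i = i0
        · subst hi; simp
        · rw [Function.update_of_ne hi]; exact hle i
      · intro b hb
        simp only [Finset.mem_filter] at hb
        funext i
        by_cases hi : i = i0
        · subst hi; simp [hb.2]
        · simp [Function.update_of_ne hi]
      · intro c hc
        simp only [Finset.mem_filter] at hc
        funext i
        by_cases hi : i = i0
        · subst hi; simp [hc.2]
        · simp [Function.update_of_ne hi]
    have hall : (Ctup d h m).filter (fun b => b i0 = 0) = Ctup d h m := by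
      clear key1
      apply Finset.filter_true_of_mem
      intro b hb
      rw [mem_Ctup] at hb
      have h1 := hb.1
      have := Finset.single_le_sum (f := b) (fun i _ => Nat.zero_le _)
        (Finset.mem_univ i0)
      omega
    rw [if_neg hcase, ← key1, hall]
    ring
end

section
/- Let S=ℤ[X_0,...,X_d] and let Δ be the ℤ-module with basis the monomials Y_0^{-1-b_0}···Y_d^{-1-b_d} with b_i∈ℕ, graded so that Δ_r has basis those monomials with Σ(1+b_i)=r. Let φ: S_{m-1}⊗Δ_{n+d+1} → S_m⊗Δ_{n+d} be multiplication by f = Σ_{i=0}^d X_i⊗Y_i, where X_i·Y_i^{-1-b_i} = Y_i^{-b_i} if b_i≥1 and 0 if b_i=0. If n≤m and ν is a weight with s_1<n (in the notation: basis monomials of the ν-weight space are indexed by tuples b with b_0+...+b_d=n and b_1+...+b_d≤s_1), then the restriction of φ to the ν-weight space is surjective. -/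
/-- The index set `A` of basis monomials: `b ∈ ℕ^{d+1}` with `Σ b_i = n`,
`b_0 ≥ 1` and `b_i ≤ h_i = s_i - s_{i+1}` for `1 ≤ i ≤ d`. -/
def Aset (d n : ℕ) (h : Fin d → ℕ) : Finset (Fin (d + 1) → ℕ) :=
  (Finset.Nat.antidiagonalTuple (d + 1) n).filter
    (fun b => 1 ≤ b 0 ∧ ∀ i : Fin d, b i.succ ≤ h i)

/-- `b = u + e_0 - e_{i+1}` (as elements of `ℤ^{d+1}`). -/
def isShift (d : ℕ) (u : Fin (d + 1) → ℕ) (i : Fin d) (b : Fin (d + 1) → ℕ) : Prop :=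
  ∀ j : Fin (d + 1), (b j : ℤ) =
    (u j : ℤ) + (if j = 0 then 1 else 0) - (if j = i.succ then 1 else 0)

instance (d : ℕ) (u : Fin (d + 1) → ℕ) (i : Fin d) (b : Fin (d + 1) → ℕ) :
    Decidable (isShift d u i b) := by unfold isShift; infer_instance

/-- Matrix coefficient of `φ`: the coefficient of `w_b` in
`φ(v_u) = w_u + Σ_{i=1}^d w_{u + e_0 - e_i}` (with `w_c = 0` for `c ∉ A`). -/
def coefφ (d : ℕ) (u b : Fin (d + 1) → ℕ) : ℤ :=
  (if b = u then 1 else 0) + ∑ i : Fin d, (if isShift d u i b then 1 else 0)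

/-- A matrix strictly triangular w.r.t. a weight has vanishing high-power entries. -/
lemma triangular_pow_eq_zero {α : Type*} [Fintype α] [DecidableEq α]
    (w : α → ℕ) (E : Matrix α α ℤ) (hE : ∀ b u, E b u ≠ 0 → w u < w b) :
    ∀ (k : ℕ) (b u : α), w b < w u + k → (E ^ k) b u = 0 := by
  intro k
  induction k with
  | zero =>
    intro b u hk
    simp only [pow_zero]
    rw [Matrix.one_apply_ne]
    rintro rfl; omega
  | succ k ih =>
    intro b u hk
    rw [pow_succ', Matrix.mul_apply]
    apply Finset.sum_eq_zero
    intro c _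
    by_cases hc : E b c = 0
    · simp [hc]
    · rw [ih c u (by have := hE b c hc; omega), mul_zero]

/-- A matrix strictly triangular w.r.t. a weight is nilpotent. -/
lemma triangular_isNilpotent {α : Type*} [Fintype α] [DecidableEq α]
    (w : α → ℕ) (E : Matrix α α ℤ) (hE : ∀ b u, E b u ≠ 0 → w u < w b) :
    IsNilpotent E := by
  refine ⟨Finset.univ.sup w + 1, ?_⟩
  ext b u
  rw [triangular_pow_eq_zero w E hE _ b u ?_, Matrix.zero_apply]
  have : w b ≤ Finset.univ.sup w := Finset.le_sup (Finset.mem_univ b)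
  omega

/-- `1 + E` acts surjectively when `E` is strictly triangular. -/
lemma triangular_surjective {α : Type*} [Fintype α] [DecidableEq α]
    (w : α → ℕ) (E : Matrix α α ℤ) (hE : ∀ b u, E b u ≠ 0 → w u < w b) :
    Function.Surjective (fun v : α → ℤ => (1 + E).mulVec v) := by
  intro t
  obtain ⟨U, hU⟩ := (triangular_isNilpotent w E hE).isUnit_one_add
  refine ⟨(↑U⁻¹ : Matrix α α ℤ).mulVec t, ?_⟩
  simp only
  rw [Matrix.mulVec_mulVec, ← hU, Units.mul_inv, Matrix.one_mulVec]

/-- A shift raises the `0`-th coordinate by `1`. -/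
lemma isShift_zero {d : ℕ} {u b : Fin (d + 1) → ℕ} {i : Fin d}
    (hs : isShift d u i b) : b 0 = u 0 + 1 := by
  have h0 := hs 0
  rw [if_pos rfl, if_neg (Fin.succ_ne_zero i).symm] at h0
  omega

/-- if `n ≤ m` and `s_1 = Σ h_i < n`, the restriction of `φ`
(multiplication by `f = Σ X_i ⊗ Y_i`) to the `ν`-weight space, expressed in the
bases `{v_b : b ∈ A}` and `{w_b : b ∈ A}`, is surjective. -/
theorem stmt2 (d m n : ℕ) (hd : 2 ≤ d) (hnm : n ≤ m) (h : Fin d → ℕ)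
    (hs1 : ∑ i, h i < n) :
    Function.Surjective (fun v : {x // x ∈ Aset d n h} → ℤ =>
      fun b : {x // x ∈ Aset d n h} =>
        ∑ u ∈ (Aset d n h).attach, coefφ d u.1 b.1 * v u) := by
  set α := {x // x ∈ Aset d n h}
  set E : Matrix α α ℤ :=
    fun b u => ∑ i : Fin d, (if isShift d u.1 i b.1 then 1 else 0) with hEdef
  have key : Function.Surjective (fun v : α → ℤ => (1 + E).mulVec v) := by
    apply triangular_surjective (fun b => b.1 0)
    intro b u hbu
    obtain ⟨i, _, hi⟩ := Finset.exists_ne_zero_of_sum_ne_zero hbu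
    simp only [ite_ne_right_iff] at hi
    have := isShift_zero hi.1
    omega
  have hfun : (fun v : α → ℤ => fun b : α =>
      ∑ u ∈ (Aset d n h).attach, coefφ d u.1 b.1 * v u) =
      (fun v : α → ℤ => (1 + E).mulVec v) := by
    funext v b
    have hattach : (Aset d n h).attach = (Finset.univ : Finset α) := by
      ext u; simp
    rw [hattach, Matrix.mulVec, dotProduct]
    apply Finset.sum_congr rfl
    intro u _
    have : (1 + E) b u = coefφ d u.1 b.1 := by
      rw [Matrix.add_apply, Matrix.one_apply, coefφ, hEdef]
      congr 1
      exact if_congr Subtype.ext_iff rfl rfl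
    rw [this]
  rw [hfun]
  exact key
end

section
/- Let n≥t≥k≥0 be integers and let D_{n,t,k} be the (k+1)×(k+1) matrix with (i,j)-entry binom(n−k, t−k+i−j) for 0≤i,j≤k (with binom(a,b)=0 for b<0 or b>a). Then det(D_{n,t,k}) = Π_{i=0}^{k} binom(n, t−i) / binom(n, i). -/
/-!
Write `binomMatrix N s m` for the `m × m` matrix `(binom N (s + i - j))`, so that
`D_{n,t,k} = binomMatrix (n - k) (t - k) (k + 1)`. Its four corner minors of size `m + 1` are
`binomMatrix N s (m + 1)` (twice) and `binomMatrix N (s ± 1) (m + 1)`, and its interior is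
`binomMatrix N s m`, so the Desnanot–Jacobi identity (Dodgson condensation) gives a three-term
recurrence in `m`. By induction it suffices that the product formula obeys the same recurrence.
For `0 ≤ s ≤ N` the formula is positive and the recurrence splits into two identities for ratios
of products, each telescoping through the relations between neighbouring binomial coefficients;
for `s < 0` or `s > N` the first or last row of the matrix vanishes.

Desnanot–Jacobi itself follows from Schur complements: with respect to the invertible interior,
every corner minor is the determinant of the interior times one entry of the `2 × 2` Schur
complement, and the whole determinant is the determinant of the interior times that of the
Schur complement.
-/

/-- The matrix `D_{n,t,k}` with `(i,j)`-entry `binom(n-k, t-k+i-j)`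
(zero when the lower index is negative or exceeds `n-k`). -/
def Dmat (n t k : ℕ) : Matrix (Fin (k + 1)) (Fin (k + 1)) ℚ :=
  fun i j =>
    if 0 ≤ (t : ℤ) - k + i - j then
      ((n - k).choose ((t : ℤ) - k + i - j).toNat : ℚ)
    else 0

open Matrix Finset

namespace Matrix

variable {ι K : Type*} [Fintype ι] [DecidableEq ι] [Field K]

theorem det_submatrix_mul_det_submatrix {R κ : Type*} [CommRing R] [Fintype κ] [DecidableEq κ]
    (X Y : Matrix ι ι R) (e₁ e₂ : κ ≃ ι) :
    (X.submatrix e₁ e₂).det * (Y.submatrix e₂ e₁).det = X.det * Y.det := by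
  rw [← det_mul, submatrix_mul_equiv, det_submatrix_equiv_self, det_mul]

theorem det_submatrix_sumMap_eq_det_mul_schur (A : Matrix (Fin 2 ⊕ ι) (Fin 2 ⊕ ι) K)
    [Invertible A.toBlocks₂₂] (a b : Fin 2) :
    (A.submatrix (Sum.map (fun _ : Unit => a) id) (Sum.map (fun _ : Unit => b) id)).det =
      A.toBlocks₂₂.det * (A.toBlocks₁₁ - A.toBlocks₁₂ * ⅟A.toBlocks₂₂ * A.toBlocks₂₁) a b := by
  have hblocks : A.submatrix (Sum.map (fun _ : Unit => a) id) (Sum.map (fun _ : Unit => b) id) =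
      fromBlocks (of fun _ _ => A (.inl a) (.inl b)) (of fun _ j => A (.inl a) (.inr j))
        (of fun i _ => A (.inr i) (.inl b)) A.toBlocks₂₂ := by
    ext (_ | i) (_ | j) <;> rfl
  rw [hblocks, det_fromBlocks₂₂, det_unique (n := Unit)]
  rfl

theorem desnanot_jacobi_toBlocks₂₂ (A : Matrix (Fin 2 ⊕ ι) (Fin 2 ⊕ ι) K)
    (h : IsUnit A.toBlocks₂₂.det) :
    A.det * A.toBlocks₂₂.det =
      (A.submatrix (Sum.map (fun _ : Unit => 0) id) (Sum.map (fun _ : Unit => 0) id)).det *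
          (A.submatrix (Sum.map (fun _ : Unit => 1) id) (Sum.map (fun _ : Unit => 1) id)).det -
        (A.submatrix (Sum.map (fun _ : Unit => 0) id) (Sum.map (fun _ : Unit => 1) id)).det *
          (A.submatrix (Sum.map (fun _ : Unit => 1) id) (Sum.map (fun _ : Unit => 0) id)).det := by
  let := A.toBlocks₂₂.invertibleOfIsUnitDet h
  have hA := det_fromBlocks₂₂ A.toBlocks₁₁ A.toBlocks₁₂ A.toBlocks₂₁ A.toBlocks₂₂
  rw [fromBlocks_toBlocks, det_fin_two] at hA
  simp only [det_submatrix_sumMap_eq_det_mul_schur, hA]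
  ring

end Matrix

namespace Fin

variable (m : ℕ)

noncomputable def unitSumEquivSucc : Unit ⊕ Fin m ≃ Fin (m + 1) :=
  Equiv.ofBijective (Sum.elim (fun _ => 0) Fin.succ) <|
    (Fintype.bijective_iff_injective_and_card _).2
      ⟨Function.injective_of_subsingleton _ |>.sumElim (Fin.succ_injective m)
        fun _ i => (Fin.succ_ne_zero i).symm, by simp [add_comm]⟩

noncomputable def unitSumEquivCastSucc : Unit ⊕ Fin m ≃ Fin (m + 1) :=
  Equiv.ofBijective (Sum.elim (fun _ => Fin.last m) Fin.castSucc) <|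
    (Fintype.bijective_iff_injective_and_card _).2
      ⟨Function.injective_of_subsingleton _ |>.sumElim (Fin.castSucc_injective m)
        fun _ i => (Fin.castSucc_lt_last i).ne', by simp [add_comm]⟩

noncomputable def cornersSumEquiv : Fin 2 ⊕ Fin m ≃ Fin (m + 2) :=
  Equiv.ofBijective (Sum.elim ![0, Fin.last (m + 1)] fun i => i.castSucc.succ) <|
    (Fintype.bijective_iff_injective_and_card _).2
      ⟨Function.Injective.sumElim (by intro a b; fin_cases a <;> fin_cases b <;> simp)
        ((Fin.succ_injective _).comp (Fin.castSucc_injective m))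
        (by intro a i; fin_cases a <;> simp [Fin.ext_iff]; omega), by simp [add_comm]⟩

end Fin

namespace Matrix

variable {K : Type*} [Field K]

theorem desnanot_jacobi {m : ℕ} (A : Matrix (Fin (m + 2)) (Fin (m + 2)) K)
    (h : IsUnit (A.submatrix (Fin.succ ∘ Fin.castSucc) (Fin.succ ∘ Fin.castSucc)).det) :
    A.det * (A.submatrix (Fin.succ ∘ Fin.castSucc) (Fin.succ ∘ Fin.castSucc)).det =
      (A.submatrix Fin.castSucc Fin.castSucc).det * (A.submatrix Fin.succ Fin.succ).det -
        (A.submatrix Fin.castSucc Fin.succ).det * (A.submatrix Fin.succ Fin.castSucc).det := by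
  have hblock :=
    desnanot_jacobi_toBlocks₂₂ (A.submatrix (Fin.cornersSumEquiv m) (Fin.cornersSumEquiv m)) h
  have h0 : Fin.cornersSumEquiv m ∘ Sum.map (fun _ : Unit => 0) id =
      Fin.castSucc ∘ Fin.unitSumEquivSucc m := by
    funext x; rcases x with _ | i <;> rfl
  have h1 : Fin.cornersSumEquiv m ∘ Sum.map (fun _ : Unit => 1) id =
      Fin.succ ∘ Fin.unitSumEquivCastSucc m := by
    funext x; rcases x with _ | i <;> simp [Fin.cornersSumEquiv, Fin.unitSumEquivCastSucc]
  rw [det_submatrix_equiv_self] at hblock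
  simp only [submatrix_submatrix, h0, h1] at hblock
  -- The off-diagonal minors are reindexed differently on rows and columns, so each picks up a
  -- sign; the two signs cancel in their product.
  rw [← submatrix_submatrix, ← submatrix_submatrix, ← submatrix_submatrix, ← submatrix_submatrix,
    det_submatrix_equiv_self, det_submatrix_equiv_self, det_submatrix_mul_det_submatrix] at hblock
  exact hblock

end Matrix

def binom (n : ℕ) (x : ℤ) : ℚ := if 0 ≤ x then (n.choose x.toNat : ℚ) else 0

theorem binom_of_eq {n : ℕ} {x : ℤ} {a : ℕ} (h : x = a) : binom n x = n.choose a := by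
  simp [binom, h]

theorem binom_of_neg {n : ℕ} {x : ℤ} (h : x < 0) : binom n x = 0 := by
  simp [binom, not_le.2 h]

theorem binom_of_lt {n : ℕ} {x : ℤ} (h : (n : ℤ) < x) : binom n x = 0 := by
  lift x to ℕ using (by omega)
  rw [binom_of_eq rfl, Nat.choose_eq_zero_of_lt (by omega), Nat.cast_zero]

theorem Nat.cast_choose_succ_mul (n k : ℕ) :
    (n.choose (k + 1) : ℚ) * (k + 1) = n.choose k * (n - k) := by
  rcases le_or_gt k n with h | h
  · rw [← Nat.cast_sub h]
    exact_mod_cast Nat.choose_succ_right_eq n k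
  · simp [Nat.choose_eq_zero_of_lt h, Nat.choose_eq_zero_of_lt (Nat.lt_succ_of_lt h)]

theorem Nat.cast_choose_mul_add_one (n k : ℕ) :
    (n.choose k : ℚ) * (n + 1) = (n + 1).choose k * (n + 1 - k) := by
  rcases le_or_gt k (n + 1) with h | h
  · rw [← Nat.cast_add_one, ← Nat.cast_sub h]
    exact_mod_cast Nat.choose_mul_succ_eq n k
  · simp [Nat.choose_eq_zero_of_lt h, Nat.choose_eq_zero_of_lt (Nat.lt_of_succ_lt h)]

theorem Nat.cast_add_one_mul_choose (n k : ℕ) :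
    ((n : ℚ) + 1) * n.choose k = (n + 1).choose (k + 1) * (k + 1) := by
  exact_mod_cast Nat.add_one_mul_choose_eq n k

theorem Nat.cast_choose_add_two_mul_choose (n b : ℕ) :
    ((b : ℚ) + 2) * (n - b) * n.choose (b + 2) * n.choose b =
      ((b : ℚ) + 1) * (n - b - 1) * n.choose (b + 1) ^ 2 := by
  have h₁ := Nat.cast_choose_succ_mul n (b + 1)
  have h₂ := Nat.cast_choose_succ_mul n b
  push_cast at h₁
  linear_combination ((n : ℚ) - b) * n.choose b * h₁ - ((n : ℚ) - b - 1) * n.choose (b + 1) * h₂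

def binomProd (n : ℕ) (t : ℤ) (m : ℕ) : ℚ := ∏ i ∈ range m, binom n (t - i) / n.choose i

theorem binomProd_zero (n : ℕ) (t : ℤ) : binomProd n t 0 = 1 := prod_range_zero _

theorem binomProd_succ (n : ℕ) (t : ℤ) (m : ℕ) :
    binomProd n t (m + 1) = binomProd n t m * (binom n (t - m) / n.choose m) :=
  prod_range_succ _ _

theorem binomProd_pos {n : ℕ} {t : ℤ} {m : ℕ} (hmt : m ≤ t + 1) (htn : t ≤ n) :
    0 < binomProd n t m := by
  refine prod_pos fun i hi => div_pos ?_ (mod_cast Nat.choose_pos (by simp at hi; omega))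
  rw [binom_of_eq (a := (t - i).toNat) (by simp at hi; omega)]
  exact_mod_cast Nat.choose_pos (by omega)

theorem binomProd_succ_of_eq {n : ℕ} {t : ℤ} {m a : ℕ} (h : t - m = a) :
    binomProd n t (m + 1) = binomProd n t m * (n.choose a / n.choose m) := by
  rw [binomProd_succ, binom_of_eq h]

theorem binomProd_succ_eq_zero_of_lt {n : ℕ} {t : ℤ} {m : ℕ} (h : t < m) :
    binomProd n t (m + 1) = 0 := by
  rw [binomProd_succ, binom_of_neg (by omega), zero_div, mul_zero]

theorem binomProd_succ_eq_zero_of_top_lt {n : ℕ} {t : ℤ} {m : ℕ} (h : n < t) :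
    binomProd n t (m + 1) = 0 :=
  prod_eq_zero (mem_range.2 m.succ_pos) (by simp [binom_of_lt h])

theorem binomProd_add_one_mul_binomProd_sub_one (n t m : ℕ) (hmt : m ≤ t) (htn : t ≤ n) :
    ((n : ℚ) - t + m + 1) * (t + 1) * (binomProd n (t + 1) (m + 1) * binomProd n (t - 1) (m + 1)) =
      ((n : ℚ) - t) * (t - m) * binomProd n t (m + 1) ^ 2 := by
  induction m with
  | zero =>
    obtain _ | b := t
    · simp [binomProd_succ_eq_zero_of_lt]
    · rw [binomProd_succ_of_eq (a := b + 2) (by push_cast; ring),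
        binomProd_succ_of_eq (a := b) (by push_cast; ring),
        binomProd_succ_of_eq (t := ↑(b + 1)) (a := b + 1) (by push_cast; ring)]
      simp only [binomProd_zero, Nat.choose_zero_right]
      push_cast
      linear_combination Nat.cast_choose_add_two_mul_choose n b
  | succ m ih =>
    specialize ih (by omega)
    obtain rfl | hlt := Nat.eq_or_lt_of_le hmt
    · rw [binomProd_succ_eq_zero_of_lt (t := ↑(m + 1) - 1) (by omega)]
      push_cast
      ring
    obtain ⟨b, rfl⟩ : ∃ b, t = b + m + 2 := ⟨t - m - 2, by omega⟩
    rw [binomProd_succ_of_eq (t := ↑(b + m + 2) + 1) (a := b + 2) (by push_cast; ring),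
      binomProd_succ_of_eq (t := ↑(b + m + 2) - 1) (a := b) (by push_cast; ring),
      binomProd_succ_of_eq (t := ↑(b + m + 2)) (a := b + 1) (by push_cast; ring)]
    have hbn : (b : ℚ) + m + 2 ≤ n := by exact_mod_cast htn
    have hne : ((n : ℚ) - b - 1) * (b + 2) ≠ 0 := mul_ne_zero (by linarith) (by positivity)
    refine mul_left_cancel₀ hne ?_
    push_cast at ih ⊢
    linear_combination
      congrArg₂ (· * ·) ih (Nat.cast_choose_add_two_mul_choose n b) / (n.choose (m + 1) : ℚ) ^ 2

theorem Nat.cast_choose_div_choose_add_two_mul {p m : ℕ} (a : ℕ) (hmp : m ≤ p) :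
    ((p : ℚ) + 2 - a) * (m + 1) *
        ((p + 2).choose a / (p + 2).choose (m + 2) * (p.choose a / p.choose m)) =
      ((p : ℚ) + 1 - a) * (m + 2) * ((p + 1).choose a / (p + 1).choose (m + 1)) ^ 2 := by
  have h₁ := Nat.cast_choose_mul_add_one (p + 1) a
  have h₂ := Nat.cast_choose_mul_add_one p a
  have h₃ := Nat.cast_add_one_mul_choose (p + 1) (m + 1)
  have h₄ := Nat.cast_add_one_mul_choose p m
  have c₁ : ((p + 2).choose (m + 2) : ℚ) ≠ 0 := by exact_mod_cast (Nat.choose_pos (by omega)).ne'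
  have c₂ : (p.choose m : ℚ) ≠ 0 := by exact_mod_cast (Nat.choose_pos hmp).ne'
  have c₃ : ((p + 1).choose (m + 1) : ℚ) ≠ 0 := by exact_mod_cast (Nat.choose_pos (by omega)).ne'
  push_cast at h₁ h₃
  field_simp
  linear_combination -((m : ℚ) + 1) * p.choose a * (p + 1).choose (m + 1) ^ 2 * h₁ -
    ((p : ℚ) + 2) * (p + 1).choose a * p.choose a * (p + 1).choose (m + 1) * h₄ +
    ((p : ℚ) + 2) * (p + 1).choose a * (p + 1).choose (m + 1) * p.choose m * h₂ +
    (p.choose m : ℚ) * (p + 1 - a) * (p + 1).choose a ^ 2 * h₃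

theorem binomProd_succ_mul_binomProd_pred (n t m : ℕ) (hmt : m ≤ t) (htn : t ≤ n) :
    ((t : ℚ) + 1) * (n - t + m + 1) *
        (binomProd (n + 1) (t + 1) (m + 2) * binomProd (n - 1) (t - 1) m) =
      ((n : ℚ) + 1) * (m + 1) * binomProd n t (m + 1) ^ 2 := by
  induction m with
  | zero =>
    rw [binomProd_succ_of_eq (t := ↑t + 1) (a := t) (by push_cast; ring),
      binomProd_succ_of_eq (t := ↑t + 1) (a := t + 1) (by simp),
      binomProd_succ_of_eq (t := ↑t) (a := t) (by simp)]
    have h₁ := Nat.cast_add_one_mul_choose n t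
    have h₂ := Nat.cast_choose_mul_add_one n t
    simp only [binomProd_zero, Nat.choose_zero_right, Nat.choose_one_right]
    field_simp
    push_cast
    linear_combination -((n : ℚ) + 1) * n.choose t * h₂ - ((n + 1).choose t : ℚ) * (n + 1 - t) * h₁
  | succ m ih =>
    specialize ih (by omega)
    obtain ⟨p, rfl⟩ : ∃ p, n = p + 1 := ⟨n - 1, by omega⟩
    obtain ⟨a, rfl⟩ : ∃ a, t = a + m + 1 := ⟨t - m - 1, by omega⟩
    rw [binomProd_succ_of_eq (t := ↑(a + m + 1) + 1) (a := a) (by push_cast; ring),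
      binomProd_succ_of_eq (t := ↑(a + m + 1) - 1) (a := a) (by push_cast; ring),
      binomProd_succ_of_eq (t := ↑(a + m + 1)) (a := a) (by push_cast; ring)]
    have hne : ((p : ℚ) + 1 - a) * (m + 1) ≠ 0 := by
      have : (a : ℚ) + m + 1 ≤ p + 1 := by exact_mod_cast htn
      exact mul_ne_zero (by linarith) (by positivity)
    refine mul_left_cancel₀ hne ?_
    simp only [Nat.add_sub_cancel] at ih ⊢
    push_cast at ih ⊢
    have hfactor := Nat.cast_choose_div_choose_add_two_mul (p := p) (m := m) a (by omega)
    linear_combination congrArg₂ (· * ·) ih hfactor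

theorem binomProd_desnanot_jacobi (n t m : ℕ) (hmt : m ≤ t) (htn : t ≤ n) :
    binomProd (n + 1) (t + 1) (m + 2) * binomProd (n - 1) (t - 1) m =
      binomProd n t (m + 1) ^ 2 - binomProd n (t + 1) (m + 1) * binomProd n (t - 1) (m + 1) := by
  have htn' : (t : ℚ) ≤ n := by exact_mod_cast htn
  have hne : ((t : ℚ) + 1) * (n - t + m + 1) ≠ 0 := mul_ne_zero (by positivity) (by linarith)
  refine mul_left_cancel₀ hne ?_
  linear_combination binomProd_succ_mul_binomProd_pred n t m hmt htn +
    binomProd_add_one_mul_binomProd_sub_one n t m hmt htn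

def binomMatrix (N : ℕ) (s : ℤ) (m : ℕ) : Matrix (Fin m) (Fin m) ℚ :=
  of fun i j => binom N (s + i - j)

section binomMatrix

variable (N : ℕ) (s : ℤ) (m : ℕ)

theorem binomMatrix_submatrix_castSucc :
    (binomMatrix N s (m + 1)).submatrix Fin.castSucc Fin.castSucc = binomMatrix N s m := by
  ext i j
  simp [binomMatrix]

theorem binomMatrix_submatrix_succ :
    (binomMatrix N s (m + 1)).submatrix Fin.succ Fin.succ = binomMatrix N s m := by
  ext i j
  simp only [binomMatrix, submatrix_apply, of_apply, Fin.val_succ]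
  congr 1
  push_cast
  ring

theorem binomMatrix_submatrix_succ_castSucc :
    (binomMatrix N s (m + 1)).submatrix Fin.succ Fin.castSucc = binomMatrix N (s + 1) m := by
  ext i j
  simp only [binomMatrix, submatrix_apply, of_apply, Fin.val_succ, Fin.val_castSucc]
  congr 1
  push_cast
  ring

theorem binomMatrix_submatrix_castSucc_succ :
    (binomMatrix N s (m + 1)).submatrix Fin.castSucc Fin.succ = binomMatrix N (s - 1) m := by
  ext i j
  simp only [binomMatrix, submatrix_apply, of_apply, Fin.val_succ, Fin.val_castSucc]
  congr 1
  push_cast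
  ring

theorem det_binomMatrix_of_neg (hs : s < 0) : (binomMatrix N s (m + 1)).det = 0 :=
  det_eq_zero_of_row_eq_zero 0 fun j => binom_of_neg (by simp; omega)

theorem det_binomMatrix_of_lt (hs : N < s) : (binomMatrix N s (m + 1)).det = 0 :=
  det_eq_zero_of_row_eq_zero (Fin.last m) fun j => binom_of_lt (by simp; omega)

end binomMatrix

theorem det_binomMatrix (N : ℕ) (s : ℤ) (m : ℕ) :
    (binomMatrix N s m).det = binomProd (N + m - 1) (s + m - 1) m := by
  induction m using Nat.twoStepInduction generalizing s with
  | zero => simp [binomProd_zero]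
  | one => simp [binomMatrix, binomProd]
  | more m ih₀ ih₁ =>
    rcases lt_or_ge s 0 with hs | hs
    · rw [det_binomMatrix_of_neg _ _ _ hs, binomProd_succ_eq_zero_of_lt (by push_cast; omega)]
    rcases lt_or_ge (N : ℤ) s with hsN | hsN
    · rw [det_binomMatrix_of_lt _ _ _ hsN, binomProd_succ_eq_zero_of_top_lt (by push_cast; omega)]
    lift s to ℕ using hs
    have hint : (binomMatrix N s (m + 2)).submatrix (Fin.succ ∘ Fin.castSucc)
        (Fin.succ ∘ Fin.castSucc) = binomMatrix N s m := by
      rw [← submatrix_submatrix, binomMatrix_submatrix_succ, binomMatrix_submatrix_castSucc]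
    have hpos : 0 < (binomMatrix N s m).det := by
      rw [ih₀]
      exact binomProd_pos (by omega) (by omega)
    have hD := desnanot_jacobi (binomMatrix N s (m + 2)) (by rw [hint]; exact hpos.ne'.isUnit)
    rw [hint, binomMatrix_submatrix_castSucc, binomMatrix_submatrix_succ,
      binomMatrix_submatrix_castSucc_succ, binomMatrix_submatrix_succ_castSucc, ih₁, ih₁, ih₁] at hD
    have key := binomProd_desnanot_jacobi (N + m) (s + m) m (by omega) (by omega)
    rw [show N + (m + 1) - 1 = N + m by omega] at hD
    rw [show N + (m + 2) - 1 = N + m + 1 by omega]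
    rw [ih₀] at hD hpos
    -- bring the arguments of `binomProd` in `hD`, `hpos` and `key` to one normal form
    push_cast at hD hpos key ⊢
    ring_nf at hD hpos key ⊢
    refine mul_right_cancel₀ hpos.ne' ?_
    linear_combination hD - key

/-- `det D_{n,t,k} = Π_{i=0}^k binom(n,t-i)/binom(n,i)`. -/
theorem stmt5 (n t k : ℕ) (htk : k ≤ t) (hnt : t ≤ n) :
    (Dmat n t k).det =
      ∏ i ∈ Finset.range (k + 1), (n.choose (t - i) : ℚ) / (n.choose i : ℚ) := by
  have hD : Dmat n t k = binomMatrix (n - k) ((t : ℤ) - k) (k + 1) := rfl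
  rw [hD, det_binomMatrix, show n - k + (k + 1) - 1 = n by omega,
    show (t : ℤ) - k + (k + 1 : ℕ) - 1 = t by push_cast; ring]
  refine prod_congr rfl fun i hi => ?_
  rw [binom_of_eq (a := t - i) (by simp at hi; omega)]
end

section
/- Let n≥t≥k≥0 be integers. Then det(D_{n,t,k}) = Π_{i=1}^{k+1} Π_{j=1}^{t−k} Π_{l=1}^{n−t} (i+j+l−1)/(i+j+l−2), where D_{n,t,k} is the (k+1)×(k+1) matrix with entries binom(n−k, t−k+i−j). -/
open Finset Polynomial
open scoped Nat

theorem Matrix.det_of_eval_add {R : Type*} [CommRing R] {m : ℕ} (p : Fin m → R[X])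
    (hp : ∀ j, (p j).natDegree < m) (v : Fin m → R) (c : R) :
    (Matrix.of fun i j => (p j).eval (v i + c)).det =
      (Matrix.of fun i j => (p j).eval (v i)).det := by
  have hfactor (w : Fin m → R) : Matrix.of (fun i j => (p j).eval (w i)) =
      Matrix.vandermonde w * Matrix.of fun (l : Fin m) j => (p j).coeff l := by
    ext i j
    rw [Matrix.of_apply, eval_eq_sum_range' (hp j), ← Fin.sum_univ_eq_sum_range]
    simp only [Matrix.mul_apply, Matrix.vandermonde_apply, Matrix.of_apply, mul_comm]
  rw [hfactor, hfactor, Matrix.det_mul, Matrix.det_mul, Matrix.det_vandermonde_add]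

theorem Nat.choose_mul_factorial_mul_factorial_eq_descFactorial {u v j l : ℕ} (hj : j ≤ u)
    (hl : l ≤ v) :
    (u - j + (v - l)).choose (u - j) * u ! * v ! =
      (u - j + (v - l))! * (u.descFactorial j * v.descFactorial l) := by
  rw [← Nat.factorial_mul_descFactorial hj, ← Nat.factorial_mul_descFactorial hl,
    Nat.choose_symm_add, ← Nat.add_choose_mul_factorial_mul_factorial]
  ring

theorem prod_Icc_one_eq_prod_range {M : Type*} [CommMonoid M] (f : ℕ → M) (m : ℕ) :
    ∏ i ∈ Icc 1 m, f i = ∏ i ∈ range m, f (i + 1) := by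
  induction m with
  | zero => rfl
  | succ m ih => rw [prod_Icc_succ_top (by omega), ih, prod_range_succ]

theorem prod_range_add_one_div_telescope {K : Type*} [Field K] [LinearOrder K]
    [IsStrictOrderedRing K] {c : K} (hc : 0 < c) (m : ℕ) :
    ∏ l ∈ range m, (c + l + 1) / (c + l) = (c + m) / c := by
  induction m with
  | zero => simp [hc.ne']
  | succ m ih =>
    have hm : 0 < c + m := by positivity
    rw [prod_range_succ, ih]
    field_simp
    push_cast
    ring

theorem prod_range_natCast_add_one {K : Type*} [Field K] [CharZero K] (c m : ℕ) :
    ∏ j ∈ range m, ((c : K) + j + 1) = (c + m)! / c ! := by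
  induction m with
  | zero => simp [Nat.factorial_ne_zero]
  | succ m ih =>
    rw [prod_range_succ, ih, ← add_assoc, Nat.factorial_succ]
    push_cast
    field_simp

noncomputable def colPoly (a b k j : ℕ) : ℚ[X] :=
  (descPochhammer ℚ j).comp (X + C (a : ℚ)) *
    (descPochhammer ℚ (k - j)).comp (C ((b + k : ℕ) : ℚ) - X)

theorem colPoly_eval_natCast (a b k j c : ℕ) (hc : c ≤ b + k) :
    (colPoly a b k j).eval (c : ℚ) =
      (a + c).descFactorial j * (b + k - c).descFactorial (k - j) := by
  rw [colPoly, eval_mul, eval_comp, eval_comp, eval_add, eval_sub, eval_X, eval_C, eval_C,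
    ← Nat.cast_sub hc, add_comm (c : ℚ), ← Nat.cast_add, descPochhammer_eval_eq_descFactorial,
    descPochhammer_eval_eq_descFactorial]

theorem colPoly_natDegree_lt (a b k j : ℕ) (hj : j ≤ k) :
    (colPoly a b k j).natDegree < k + 1 := by
  have hlin : (C ((b + k : ℕ) : ℚ) - X).natDegree ≤ 1 :=
    (natDegree_sub_le _ _).trans (by rw [natDegree_C, natDegree_X]; omega)
  calc (colPoly a b k j).natDegree
      ≤ j * 1 + (k - j) * 1 := by
        refine natDegree_mul_le.trans (add_le_add ?_ ?_) <;>
          refine natDegree_comp_le.trans ?_ <;> rw [descPochhammer_natDegree]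
        · rw [natDegree_X_add_C]
        · exact Nat.mul_le_mul_left _ hlin
    _ < k + 1 := by omega

theorem Dmat_apply_eq (a b k : ℕ) (i j : Fin (k + 1)) :
    Dmat (k + a + b) (k + a) k i j =
      (a + b)! / ((a + i)! * (b + k - i)! : ℚ) * (colPoly a b k j).eval (i : ℚ) := by
  have hi := i.is_le
  have hj := j.is_le
  rw [colPoly_eval_natCast _ _ _ _ _ (by omega), Dmat, add_assoc k, Nat.add_sub_cancel_left]
  simp only [Nat.cast_add, add_sub_cancel_left]
  -- outside `0 ≤ a + i - j ≤ a + b` one of the two falling factorials has a zero factor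
  by_cases hnonneg : (j : ℕ) ≤ a + i
  · rw [if_pos (by omega), ← Nat.cast_add, ← Nat.cast_sub hnonneg, Int.toNat_natCast]
    by_cases hle : (i : ℕ) ≤ b + j
    · have hab : a + b = a + i - j + (b + k - i - (k - j)) := by omega
      have key := Nat.choose_mul_factorial_mul_factorial_eq_descFactorial hnonneg
        (show k - j ≤ b + k - i by omega)
      rw [← hab] at key
      rw [div_mul_eq_mul_div, eq_div_iff (by positivity), ← mul_assoc]
      exact_mod_cast key
    · rw [Nat.choose_eq_zero_of_lt (by omega),
        Nat.descFactorial_eq_zero_iff_lt.mpr (show b + k - i < k - j by omega)]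
      simp
  · rw [if_neg (by omega), Nat.descFactorial_eq_zero_iff_lt.mpr (not_le.mp hnonneg)]
    simp

theorem colPoly_eval_natCast_add_eq_zero (a b k : ℕ) {i j : ℕ} (hij : j < i) (hi : i ≤ k) :
    (colPoly a b k j).eval ((i : ℚ) + b) = 0 := by
  rw [← Nat.cast_add, colPoly_eval_natCast _ _ _ _ _ (by omega),
    Nat.descFactorial_eq_zero_iff_lt.mpr (show b + k - (i + b) < k - j by omega)]
  simp

theorem factorial_div_mul_colPoly_eval_diag (a b k i : ℕ) (hi : i ≤ k) :
    (a + b)! / ((a + i)! * (b + k - i)! : ℚ) * (colPoly a b k i).eval ((i : ℚ) + b) =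
      (a + b + i)! / (a + i)! * ((k - i)! / (b + (k - i))!) := by
  have hdesc : (a + b)! * (a + b + i).descFactorial i = (a + b + i)! := by
    simpa using Nat.factorial_mul_descFactorial (Nat.le_add_left i (a + b))
  rw [← Nat.cast_add, colPoly_eval_natCast _ _ _ _ _ (by omega),
    show a + (i + b) = a + b + i by ring, show b + k - (i + b) = k - i by omega,
    show b + k - i = b + (k - i) by omega, Nat.descFactorial_self, ← hdesc]
  push_cast
  field_simp

theorem det_Dmat_eq_prod_factorial (a b k : ℕ) :
    (Dmat (k + a + b) (k + a) k).det =
      ∏ i ∈ range (k + 1), ((a + b + i)! / (a + i)! * (i ! / (b + i)!) : ℚ) := by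
  have hrows : (Dmat (k + a + b) (k + a) k).det =
      (∏ i : Fin (k + 1), (a + b)! / ((a + i)! * (b + k - i)! : ℚ)) *
        (Matrix.of fun (i j : Fin (k + 1)) => (colPoly a b k j).eval (i : ℚ)).det := by
    rw [← Matrix.det_mul_column]
    exact congrArg Matrix.det (Matrix.ext (Dmat_apply_eq a b k))
  have hshift := Matrix.det_of_eval_add (fun j : Fin (k + 1) => colPoly a b k j)
    (fun j => colPoly_natDegree_lt a b k j j.is_le) (fun i => (i : ℚ)) b
  have htri : (Matrix.of fun (i j : Fin (k + 1)) =>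
      (colPoly a b k j).eval ((i : ℚ) + b)).IsUpperTriangular := fun i j hij =>
    colPoly_eval_natCast_add_eq_zero a b k hij i.is_le
  rw [hrows, ← hshift, Matrix.det_of_isUpperTriangular htri, ← prod_mul_distrib]
  simp only [Matrix.of_apply]
  rw [Fin.prod_univ_eq_prod_range (fun i => (a + b)! / ((a + i)! * (b + k - i)! : ℚ) *
    (colPoly a b k i).eval ((i : ℚ) + b)), prod_congr rfl fun i hi =>
      factorial_div_mul_colPoly_eval_diag a b k i (Nat.lt_succ_iff.mp (mem_range.mp hi)),
    prod_mul_distrib, prod_mul_distrib,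
    ← prod_range_reflect (fun i => (i ! / (b + i)! : ℚ)), Nat.add_sub_cancel]

theorem prod_Icc_prod_Icc_prod_Icc_div_eq_prod_factorial (a b k : ℕ) :
    ∏ i ∈ Icc 1 (k + 1), ∏ j ∈ Icc 1 a, ∏ l ∈ Icc 1 b,
      ((i : ℚ) + j + l - 1) / ((i : ℚ) + j + l - 2) =
      ∏ i ∈ range (k + 1), ((a + b + i)! / (a + i)! * (i ! / (b + i)!) : ℚ) := by
  rw [prod_Icc_one_eq_prod_range]
  refine prod_congr rfl fun i _ => ?_
  have htelescope (j : ℕ) : ∏ l ∈ Icc 1 b, (((i + 1 : ℕ) : ℚ) + (j + 1 : ℕ) + l - 1) /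
      (((i + 1 : ℕ) : ℚ) + (j + 1 : ℕ) + l - 2) =
      (((i + b : ℕ) : ℚ) + j + 1) / ((i : ℚ) + j + 1) := by
    calc _ = ∏ l ∈ range b, ((i + j + 1 : ℚ) + l + 1) / ((i + j + 1 : ℚ) + l) := by
          rw [prod_Icc_one_eq_prod_range]
          refine prod_congr rfl fun l _ => ?_
          push_cast
          ring
      _ = _ := by
          rw [prod_range_add_one_div_telescope (by positivity)]
          push_cast
          ring
  rw [prod_Icc_one_eq_prod_range, prod_congr rfl fun j _ => htelescope j, prod_div_distrib,
    prod_range_natCast_add_one, prod_range_natCast_add_one, show i + b + a = a + b + i by ring,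
    add_comm i a, add_comm i b]
  field_simp

/-- Krattenthaler's formula:
`det D_{n,t,k} = Π_{i=1}^{k+1} Π_{j=1}^{t-k} Π_{l=1}^{n-t} (i+j+l-1)/(i+j+l-2)`. -/
theorem stmt6 (n t k : ℕ) (htk : k ≤ t) (hnt : t ≤ n) :
    (Dmat n t k).det =
      ∏ i ∈ Finset.Icc 1 (k + 1), ∏ j ∈ Finset.Icc 1 (t - k), ∏ l ∈ Finset.Icc 1 (n - t),
        ((i : ℚ) + j + l - 1) / ((i : ℚ) + j + l - 2) := by
  obtain ⟨a, rfl⟩ := Nat.exists_eq_add_of_le htk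
  obtain ⟨b, rfl⟩ := Nat.exists_eq_add_of_le hnt
  rw [Nat.add_sub_cancel_left, Nat.add_sub_cancel_left, det_Dmat_eq_prod_factorial,
    prod_Icc_prod_Icc_prod_Icc_div_eq_prod_factorial]
end

section
/- Let p be prime, d≥2, 2≤a≤p−1, n=ap^d, and for 1≤i≤d−1 set t_i=p^d+p^{i−1} and k_i=p^i. Then the p-adic valuation of d_{n,t_i,k_i} := Π_{l=0}^{k_i} binom(n, t_i−l) / Π_{l=0}^{k_i} binom(n, l) equals d − v_p(binom(t_i, k_i)) − (i−1), and this quantity is at least 1. -/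
open Finset

namespace Stmt8Aux

/-- Generic carry criterion at a modulus dividing `N`. -/
lemma carry_iff {m N k : ℕ} (hm : 0 < m) (hk : k ≤ N) (hN : m ∣ N) :
    m ≤ k % m + (N - k) % m ↔ ¬ m ∣ k := by
  constructor
  · intro h hdk
    have h1 : k % m = 0 := Nat.mod_eq_zero_of_dvd hdk
    have h2 : (N - k) % m = 0 := Nat.mod_eq_zero_of_dvd (Nat.dvd_sub hN hdk)
    omega
  · intro hdk
    have h1 : (k % m + (N - k) % m) % m = 0 := by
      rw [← Nat.add_mod]
      have h2 : k + (N - k) = N := by omega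
      rw [h2]
      exact Nat.mod_eq_zero_of_dvd hN
    have h2 : k % m ≠ 0 := fun h => hdk (Nat.dvd_of_mod_eq_zero h)
    exact Nat.le_of_dvd (by omega) (Nat.dvd_of_mod_eq_zero h1)

lemma card_filter_not_dvd {p d x : ℕ} (hp : p.Prime) (hx : 0 < x) (hxd : x < p ^ d) :
    ((Ico 1 (d + 1)).filter fun j => ¬ p ^ j ∣ x).card = d - padicValNat p x := by
  haveI := Fact.mk hp
  have hv : padicValNat p x < d := by
    have h1 : p ^ padicValNat p x ≤ x := Nat.le_of_dvd hx pow_padicValNat_dvd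
    exact (Nat.pow_lt_pow_iff_right hp.one_lt).1 (h1.trans_lt hxd)
  have heq : ((Ico 1 (d + 1)).filter fun j => ¬ p ^ j ∣ x)
      = Ico (padicValNat p x + 1) (d + 1) := by
    ext j
    simp only [mem_filter, mem_Ico, padicValNat_dvd_iff_le hx.ne']
    omega
  rw [heq, Nat.card_Ico]
  omega

/-- Main Kummer computation for `choose (a * p ^ d) k` when the divisibility
pattern of `k` matches that of some `0 < r < p ^ d`. -/
lemma valGen {p a d k r : ℕ} (hp : p.Prime) (ha : 0 < a) (hap : a < p)
    (hk : k ≤ a * p ^ d) (hdvd : ∀ j, j ≤ d → (p ^ j ∣ k ↔ p ^ j ∣ r))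
    (hr : 0 < r) (hrd : r < p ^ d) :
    padicValNat p ((a * p ^ d).choose k) = d - padicValNat p r := by
  haveI := Fact.mk hp
  have hn0 : a * p ^ d ≠ 0 :=
    Nat.mul_ne_zero (by omega) (pow_pos hp.pos d).ne'
  have hlog : Nat.log p (a * p ^ d) < d + 1 := by
    apply Nat.log_lt_of_lt_pow hn0
    have h1 : a * p ^ d < p * p ^ d := mul_lt_mul_of_pos_right hap (pow_pos hp.pos d)
    calc a * p ^ d < p * p ^ d := h1
      _ = p ^ (d + 1) := by ring
  rw [padicValNat_choose hk hlog]
  have heq : ((Ico 1 (d + 1)).filter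
        fun j => p ^ j ≤ k % p ^ j + (a * p ^ d - k) % p ^ j)
      = (Ico 1 (d + 1)).filter fun j => ¬ p ^ j ∣ r := by
    apply Finset.filter_congr
    intro j hj
    simp only [mem_Ico] at hj
    have hjd : j ≤ d := by omega
    have hdvdN : p ^ j ∣ a * p ^ d := Dvd.dvd.mul_left (pow_dvd_pow p hjd) a
    rw [carry_iff (pow_pos hp.pos j) hk hdvdN, hdvd j hjd]
  rw [heq, card_filter_not_dvd hp hr hrd]

lemma valC {p a d : ℕ} (hp : p.Prime) (ha : 0 < a) (hap : a < p) :
    padicValNat p ((a * p ^ d).choose (p ^ d)) = 0 := by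
  haveI := Fact.mk hp
  have hk : p ^ d ≤ a * p ^ d := Nat.le_mul_of_pos_left _ ha
  have hn0 : a * p ^ d ≠ 0 :=
    Nat.mul_ne_zero (by omega) (pow_pos hp.pos d).ne'
  have hlog : Nat.log p (a * p ^ d) < d + 1 := by
    apply Nat.log_lt_of_lt_pow hn0
    calc a * p ^ d < p * p ^ d := mul_lt_mul_of_pos_right hap (pow_pos hp.pos d)
      _ = p ^ (d + 1) := by ring
  rw [padicValNat_choose hk hlog]
  rw [Finset.filter_eq_empty_iff.2, Finset.card_empty]
  intro j hj
  simp only [mem_Ico] at hj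
  have hjd : j ≤ d := by omega
  have h := carry_iff (m := p ^ j) (pow_pos hp.pos j) hk
    (Dvd.dvd.mul_left (pow_dvd_pow p hjd) a)
  rw [h]
  exact not_not_intro (pow_dvd_pow p hjd)

lemma valD {p d i : ℕ} (hp : p.Prime) (hi1 : 1 ≤ i) (hid : i < d) :
    padicValNat p ((p ^ d + p ^ (i - 1)).choose (p ^ i)) = d - i := by
  haveI := Fact.mk hp
  have hpi_le : p ^ i ≤ p ^ d := Nat.pow_le_pow_right hp.pos hid.le
  have hi1d : p ^ (i - 1) < p ^ d := Nat.pow_lt_pow_right hp.one_lt (by omega)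
  have hk : p ^ i ≤ p ^ d + p ^ (i - 1) := le_trans hpi_le (Nat.le_add_right _ _)
  have ht_lt : p ^ d + p ^ (i - 1) < p ^ (d + 1) := by
    have h2 : 2 * p ^ d ≤ p * p ^ d := by
      have := hp.two_le
      have := pow_pos hp.pos d
      nlinarith
    have h3 : p * p ^ d = p ^ (d + 1) := by ring
    omega
  have hlog : Nat.log p (p ^ d + p ^ (i - 1)) < d + 1 :=
    Nat.log_lt_of_lt_pow (by have := pow_pos hp.pos d; omega) ht_lt
  rw [padicValNat_choose hk hlog]
  have heq : ((Ico 1 (d + 1)).filter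
        fun j => p ^ j ≤ p ^ i % p ^ j + (p ^ d + p ^ (i - 1) - p ^ i) % p ^ j)
      = Ico (i + 1) (d + 1) := by
    ext j
    simp only [mem_filter, mem_Ico]
    constructor
    · rintro ⟨⟨hj1, hj2⟩, h3⟩
      refine ⟨?_, hj2⟩
      by_contra hji
      push_neg at hji
      have e1 : p ^ i % p ^ j = 0 := Nat.mod_eq_zero_of_dvd (pow_dvd_pow p (by omega))
      have e2 := Nat.mod_lt (p ^ d + p ^ (i - 1) - p ^ i) (pow_pos hp.pos j)
      omega
    · rintro ⟨hj1, hj2⟩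
      refine ⟨⟨by omega, hj2⟩, ?_⟩
      by_contra hlt
      push_neg at hlt
      have hij : p ^ i < p ^ j := Nat.pow_lt_pow_right hp.one_lt (by omega)
      have hi1j : p ^ (i - 1) < p ^ j := lt_trans (Nat.pow_lt_pow_right hp.one_lt (by omega)) hij
      have hi1i : p ^ (i - 1) < p ^ i := Nat.pow_lt_pow_right hp.one_lt (by omega)
      have e1 : p ^ i % p ^ j = p ^ i := Nat.mod_eq_of_lt hij
      have e0 : p ^ d % p ^ j = 0 := Nat.mod_eq_zero_of_dvd (pow_dvd_pow p (by omega))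
      have e3 : (p ^ d + p ^ (i - 1)) % p ^ j = p ^ (i - 1) := by
        rw [Nat.add_mod, e0, zero_add, Nat.mod_eq_of_lt hi1j, Nat.mod_eq_of_lt hi1j]
      have e2 : (p ^ i % p ^ j + (p ^ d + p ^ (i - 1) - p ^ i) % p ^ j) % p ^ j
          = (p ^ d + p ^ (i - 1)) % p ^ j := by
        rw [← Nat.add_mod, Nat.add_sub_cancel' hk]
      have e4 : p ^ i % p ^ j + (p ^ d + p ^ (i - 1) - p ^ i) % p ^ j
          = p ^ (i - 1) :=
        calc p ^ i % p ^ j + (p ^ d + p ^ (i - 1) - p ^ i) % p ^ j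
            = (p ^ i % p ^ j + (p ^ d + p ^ (i - 1) - p ^ i) % p ^ j) % p ^ j :=
              (Nat.mod_eq_of_lt hlt).symm
          _ = (p ^ d + p ^ (i - 1)) % p ^ j := e2
          _ = p ^ (i - 1) := e3
      have e5 : p ^ i ≤ p ^ (i - 1) := by
        rw [← e4, e1]; exact Nat.le_add_right _ _
      exact absurd e5 (by omega)
  rw [heq, Nat.card_Ico]
  omega

lemma val_add_eq {p M r : ℕ} (hp : p.Prime) (hr : 0 < r)
    (hM : p ^ (padicValNat p r + 1) ∣ M) :
    padicValNat p (M + r) = padicValNat p r := by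
  haveI := Fact.mk hp
  have h0 : M + r ≠ 0 := by omega
  apply le_antisymm
  · by_contra h
    push_neg at h
    have h1 : p ^ (padicValNat p r + 1) ∣ M + r := (padicValNat_dvd_iff_le h0).2 h
    have h2 : p ^ (padicValNat p r + 1) ∣ r := by
      have := Nat.dvd_sub h1 hM
      rwa [Nat.add_sub_cancel_left] at this
    have := (padicValNat_dvd_iff_le hr.ne').1 h2
    omega
  · refine (padicValNat_dvd_iff_le h0).1 (dvd_add ?_ pow_padicValNat_dvd)
    exact dvd_trans (pow_dvd_pow p (Nat.le_succ _)) hM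

end Stmt8Aux

lemma val_prod {p : ℕ} (hp : p.Prime) {s : Finset ℕ} {f : ℕ → ℕ} (hf : ∀ l ∈ s, f l ≠ 0) :
    padicValNat p (∏ l ∈ s, f l) = ∑ l ∈ s, padicValNat p (f l) := by
  rw [← Nat.factorization_def _ hp, Nat.factorization_prod hf, Finset.sum_apply']
  exact Finset.sum_congr rfl fun l _ => Nat.factorization_def _ hp


open Stmt8Aux Finset in
/-- for `p` prime, `d ≥ 2`, `2 ≤ a ≤ p-1`, `n = a·p^d`,
`t_i = p^d + p^{i-1}`, `k_i = p^i` (`1 ≤ i ≤ d-1`), the `p`-adic valuation of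
`d_{n,t_i,k_i} = Π_{l=0}^{k_i} binom(n,t_i-l) / Π_{l=0}^{k_i} binom(n,l)` equals
`d - v_p(binom(t_i,k_i)) - (i-1)`, and this is at least `1`. -/
theorem stmt8 (p d a i : ℕ) (hp : p.Prime) (hd : 2 ≤ d)
    (ha1 : 2 ≤ a) (ha2 : a ≤ p - 1) (hi1 : 1 ≤ i) (hi2 : i ≤ d - 1) :
    padicValRat p
        ((∏ l ∈ Finset.range (p ^ i + 1), ((a * p ^ d).choose (p ^ d + p ^ (i - 1) - l) : ℚ)) /
          (∏ l ∈ Finset.range (p ^ i + 1), ((a * p ^ d).choose l : ℚ))) =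
      (d : ℤ) - padicValNat p ((p ^ d + p ^ (i - 1)).choose (p ^ i)) - (i - 1 : ℕ) ∧
    1 ≤ padicValRat p
        ((∏ l ∈ Finset.range (p ^ i + 1), ((a * p ^ d).choose (p ^ d + p ^ (i - 1) - l) : ℚ)) /
          (∏ l ∈ Finset.range (p ^ i + 1), ((a * p ^ d).choose l : ℚ))) := by
  haveI := Fact.mk hp
  have hp1 : 1 < p := hp.one_lt
  have hap : a < p := by omega
  have ha0 : 0 < a := by omega
  have hid : i < d := by omega
  have hK'pos : 0 < p ^ (i - 1) := pow_pos hp.pos _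
  have hK'K : p ^ (i - 1) < p ^ i := Nat.pow_lt_pow_right hp1 (by omega)
  have hKd : p ^ i < p ^ d := Nat.pow_lt_pow_right hp1 hid
  have hK'd : p ^ (i - 1) < p ^ d := lt_trans hK'K hKd
  have hpd_n : p ^ d ≤ a * p ^ d := Nat.le_mul_of_pos_left _ ha0
  have h2pd : 2 * p ^ d ≤ a * p ^ d := Nat.mul_le_mul_right _ ha1
  have htn : p ^ d + p ^ (i - 1) ≤ a * p ^ d := by omega
  rw [← Nat.cast_prod, ← Nat.cast_prod]
  set Nn : ℕ := ∏ l ∈ range (p ^ i + 1), (a * p ^ d).choose (p ^ d + p ^ (i - 1) - l) with hNn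
  set Dd : ℕ := ∏ l ∈ range (p ^ i + 1), (a * p ^ d).choose l with hDd
  have hfN : ∀ l ∈ range (p ^ i + 1), (a * p ^ d).choose (p ^ d + p ^ (i - 1) - l) ≠ 0 :=
    fun l _ => (Nat.choose_pos (le_trans (Nat.sub_le _ _) htn)).ne'
  have hfD : ∀ l ∈ range (p ^ i + 1), (a * p ^ d).choose l ≠ 0 := by
    intro l hl
    simp only [mem_range] at hl
    exact (Nat.choose_pos (by omega : l ≤ a * p ^ d)).ne'
  have hNn0 : Nn ≠ 0 := by rw [hNn]; exact Finset.prod_ne_zero_iff.2 hfN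
  have hDd0 : Dd ≠ 0 := by rw [hDd]; exact Finset.prod_ne_zero_iff.2 hfD
  have hvN : padicValNat p Nn
      = ∑ l ∈ range (p ^ i + 1),
          padicValNat p ((a * p ^ d).choose (p ^ d + p ^ (i - 1) - l)) := by
    rw [hNn]; exact val_prod hp hfN
  have hvD : padicValNat p Dd
      = ∑ l ∈ range (p ^ i + 1), padicValNat p ((a * p ^ d).choose l) := by
    rw [hDd]; exact val_prod hp hfD
  have hden : ∑ l ∈ range (p ^ i + 1), padicValNat p ((a * p ^ d).choose l)
      = ∑ l ∈ range (p ^ i), (d - padicValNat p (l + 1)) := by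
    rw [Finset.sum_range_succ']
    have h0 : padicValNat p ((a * p ^ d).choose 0) = 0 := by simp
    rw [h0, add_zero]
    refine Finset.sum_congr rfl fun l hl => ?_
    simp only [mem_range] at hl
    exact valGen hp ha0 hap (by omega) (fun j hj => Iff.rfl) (by omega) (by omega)
  have hsplitIdx : p ^ i + 1 = (p ^ (i - 1) + 1) + (p ^ i - p ^ (i - 1)) := by omega
  have hnum : ∑ l ∈ range (p ^ i + 1),
        padicValNat p ((a * p ^ d).choose (p ^ d + p ^ (i - 1) - l))
      = (∑ l ∈ range (p ^ (i - 1)), (d - padicValNat p (l + 1)))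
        + ∑ l ∈ range (p ^ i - p ^ (i - 1)), (d - padicValNat p (l + 1)) := by
    rw [hsplitIdx, Finset.sum_range_add, Finset.sum_range_succ]
    have hg2 : padicValNat p ((a * p ^ d).choose (p ^ d + p ^ (i - 1) - p ^ (i - 1))) = 0 := by
      rw [show p ^ d + p ^ (i - 1) - p ^ (i - 1) = p ^ d by omega]
      exact valC hp ha0 hap
    rw [hg2, add_zero]
    congr 1
    · rw [← Finset.sum_range_reflect (fun l => d - padicValNat p (l + 1)) (p ^ (i - 1))]
      refine Finset.sum_congr rfl fun l hl => ?_
      simp only [mem_range] at hl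
      rw [show p ^ d + p ^ (i - 1) - l = p ^ d + (p ^ (i - 1) - 1 - l + 1) by omega]
      exact valGen hp ha0 hap (by omega)
        (fun j hj => Nat.dvd_add_right (pow_dvd_pow p hj)) (by omega) (by omega)
    · refine Finset.sum_congr rfl fun l hl => ?_
      simp only [mem_range] at hl
      rw [show p ^ d + p ^ (i - 1) - (p ^ (i - 1) + 1 + l) = p ^ d - (l + 1) by omega]
      refine valGen hp ha0 hap (by omega) (fun j hj => ?_) (by omega) (by omega)
      constructor
      · intro h
        have h2 := Nat.dvd_sub (pow_dvd_pow p hj) h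
        rwa [show p ^ d - (p ^ d - (l + 1)) = l + 1 by omega] at h2
      · intro h
        exact Nat.dvd_sub (pow_dvd_pow p hj) h
  have hpow : p ^ (i - 1) * p = p ^ i := by
    rw [← pow_succ]; congr 1; omega
  have hkey : ∑ l ∈ range (p ^ (i - 1)), (d - padicValNat p (l + 1))
      = (∑ l ∈ range (p ^ (i - 1)),
          (d - padicValNat p (p ^ i - p ^ (i - 1) + l + 1))) + 1 := by
    obtain ⟨m, hm⟩ : ∃ m, p ^ (i - 1) = m + 1 := ⟨p ^ (i - 1) - 1, by omega⟩
    rw [show range (p ^ (i - 1)) = range (m + 1) by rw [hm],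
      Finset.sum_range_succ, Finset.sum_range_succ]
    have hlast1 : d - padicValNat p (m + 1) = d - (i - 1) := by
      rw [show m + 1 = p ^ (i - 1) from hm.symm, padicValNat.prime_pow]
    have hlast2 : d - padicValNat p (p ^ i - p ^ (i - 1) + m + 1) = d - i := by
      rw [show p ^ i - p ^ (i - 1) + m + 1 = p ^ i by omega, padicValNat.prime_pow]
    have hmid : ∀ l ∈ range m, (d - padicValNat p (l + 1))
        = (d - padicValNat p (p ^ i - p ^ (i - 1) + l + 1)) := by
      intro l hl
      simp only [mem_range] at hl
      congr 1
      rw [show p ^ i - p ^ (i - 1) + l + 1 = p ^ i - p ^ (i - 1) + (l + 1) by omega]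
      refine (val_add_eq hp (by omega) ?_).symm
      have hv : padicValNat p (l + 1) + 1 ≤ i - 1 := by
        have h1 : p ^ padicValNat p (l + 1) ≤ l + 1 :=
          Nat.le_of_dvd (by omega) pow_padicValNat_dvd
        have h2 : l + 1 < p ^ (i - 1) := by omega
        have := (Nat.pow_lt_pow_iff_right hp1).1 (h1.trans_lt h2)
        omega
      refine dvd_trans (pow_dvd_pow p hv) ?_
      have hfac : p ^ i - p ^ (i - 1) = p ^ (i - 1) * (p - 1) := by
        rw [Nat.mul_sub, hpow, mul_one]
      exact ⟨p - 1, hfac⟩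
    rw [Finset.sum_congr rfl hmid, hlast1, hlast2]
    omega
  have hVD2 : ∑ l ∈ range (p ^ i), (d - padicValNat p (l + 1))
      = (∑ l ∈ range (p ^ i - p ^ (i - 1)), (d - padicValNat p (l + 1)))
        + ∑ l ∈ range (p ^ (i - 1)), (d - padicValNat p (p ^ i - p ^ (i - 1) + l + 1)) := by
    conv_lhs => rw [show p ^ i = (p ^ i - p ^ (i - 1)) + p ^ (i - 1) by omega]
    exact Finset.sum_range_add _ _ _
  have hfinal : padicValNat p Nn = padicValNat p Dd + 1 := by
    rw [hvN, hvD, hnum, hden, hVD2, hkey]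
    omega
  have hval : padicValRat p ((Nn : ℚ) / (Dd : ℚ)) = 1 := by
    rw [padicValRat.div (p := p) (by exact_mod_cast hNn0) (by exact_mod_cast hDd0),
      padicValRat.of_nat, padicValRat.of_nat, hfinal]
    push_cast
    ring
  constructor
  · rw [hval, valD hp hi1 hid]
    omega
  · rw [hval]
end

section
/- Let p be prime, d≥1, 2≤a≤p−1, and m=ap^d−2. Write the base-p digits of m as c_0(m)=p−2, c_u(m)=p−1 for 1≤u≤d−1, c_d(m)=a−1, c_u(m)=0 for u>d. Let E(m) be the set of tuples (a_1,...,a_d)∈{0,1,2}^d such that 0 ≤ c_u(m)+a_{u+1}p−a_u ≤ 3(p−1) for all u=0,...,d (with a_0=a_{d+1}=0). Then E(m) = {0,1}^d. -/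
/-- The base-`p` digits of `m = a·p^d - 2`: `c_0 = p-2`, `c_u = p-1` for
`1 ≤ u ≤ d-1`, `c_d = a-1`, and `c_u = 0` for `u > d`. -/
def digitC (p d a : ℕ) : ℕ → ℕ := fun u =>
  if u = 0 then p - 2 else if u < d then p - 1 else if u = d then a - 1 else 0

/-- `E(m) = {0,1}^d`, i.e. a tuple `(a_1,...,a_d)` with entries in
`{0,1,2}` (encoded as `t : ℕ → ℕ` with `t 0 = 0` and `t u = 0` for `u > d`,
`t u = a_u` for `1 ≤ u ≤ d`) satisfies
`0 ≤ c_u(m) + a_{u+1}·p - a_u ≤ 3(p-1)` for all `u = 0,...,d`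
if and only if all entries are `0` or `1`. -/
theorem stmt10 (p d a : ℕ) (hp : p.Prime) (hd : 1 ≤ d) (ha1 : 2 ≤ a) (ha2 : a ≤ p - 1)
    (t : ℕ → ℕ) (ht0 : t 0 = 0) (htd : ∀ u, d < u → t u = 0) :
    ((∀ u, 1 ≤ u → u ≤ d → t u ≤ 2) ∧
      (∀ u ≤ d, 0 ≤ (digitC p d a u : ℤ) + t (u + 1) * p - t u ∧
        (digitC p d a u : ℤ) + t (u + 1) * p - t u ≤ 3 * ((p : ℤ) - 1))) ↔
    (∀ u, 1 ≤ u → u ≤ d → t u ≤ 1) := by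
  have hp2 : 2 ≤ p := hp.two_le
  have hp3 : 3 ≤ p := by omega
  constructor
  · rintro ⟨h1, h2⟩
    have key : ∀ v, v ≤ d → t v ≤ 1 := by
      intro v
      induction v with
      | zero => intro _; omega
      | succ n ih =>
        intro hvd
        by_contra hcon
        have htn2 : t (n + 1) = 2 := by
          have := h1 (n + 1) (by omega) hvd
          omega
        have htn : t n ≤ 1 := by
          rcases Nat.eq_zero_or_pos n with h0 | h0
          · subst h0; omega
          · exact ih (by omega)
        have hdc := (h2 n (by omega)).2
        have hcast : ((t (n + 1)) : ℤ) = 2 := by exact_mod_cast htn2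
        rw [hcast] at hdc
        unfold digitC at hdc
        split_ifs at hdc with hn0 hnd hnd'
        · rw [hn0, ht0] at hdc; omega
        · omega
        · omega
        · omega
    exact fun u _ hud => key u hud
  · intro h
    refine ⟨fun u hu1 hud => le_trans (h u hu1 hud) (by omega), ?_⟩
    intro u hud
    have htu1 : t (u + 1) ≤ 1 := by
      rcases lt_or_ge d (u + 1) with hlt | hge
      · rw [htd _ hlt]; omega
      · exact h (u + 1) (by omega) hge
    have htu : t u ≤ 1 := by
      rcases Nat.eq_zero_or_pos u with h0 | h0
      · subst h0; omega
      · exact h u h0 hud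
    have e1 : ((t (u + 1)) : ℤ) = 0 ∨ ((t (u + 1)) : ℤ) = 1 := by omega
    have e2 : ((t u) : ℤ) = 0 ∨ ((t u) : ℤ) = 1 := by omega
    unfold digitC
    rcases e1 with e1 | e1 <;> rcases e2 with e2 | e2 <;> rw [e1, e2] <;>
      split_ifs with hn0 hnd hnd' <;> constructor <;> push_cast <;> omega
end
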